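/- arXiv:1309.2534 — 4 statements merged into one kernel-verified Lean document; each statement's English description precedes it below -/
import Mathlib

section
/- The double sum over all pairs of integers m ≥ n ≥ 1 of 1/(m² n) converges and equals 2ζ(3). -/
/-!
Let `S = ∑_{m ≥ n ≥ 1} 1/(m² n)` and `A = ∑_{m > n ≥ 1} 1/(m² n)`; the diagonal gives
`S = ζ(3) + A`. Euler's auxiliary sum `T = ∑_{a, b ≥ 1} 1/(a b (a + b))` is computed in two ways.
The partial fractions `1/(a b (a + b)) = (1/a + 1/b)/(a + b)²` and the symmetry `a ↔ b` give
`T = 2A`. Summing over `b` first, `∑_b 1/(b (a + b)) = H_a / a` telescopes, so `T = ∑_a H_a / a²`,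
which is also `S` summed over `n` first. Hence `S = T = 2A`, so `A = ζ(3)` and `S = 2ζ(3)`.
-/

open Finset Filter Topology

theorem summable_inv_add_one_rpow {s : ℝ} (hs : 1 < s) :
    Summable fun n : ℕ => (((n : ℝ) + 1) ^ s)⁻¹ := by
  simpa using (summable_nat_add_iff 1).mpr (Real.summable_nat_rpow_inv.mpr hs)

theorem mul_rpow_three_halves_le {x y : ℝ} (hx : 0 ≤ x) (hy : 0 ≤ y) :
    (x * y) ^ (3 / 2 : ℝ) ≤ x * y * (x + y) := by
  have hxy : 0 ≤ x * y := mul_nonneg hx hy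
  have hsqrt : √(x * y) ≤ x + y := Real.sqrt_le_iff.mpr ⟨by positivity, by nlinarith⟩
  calc (x * y) ^ (3 / 2 : ℝ) = x * y * √(x * y) := by
        rw [Real.sqrt_eq_rpow, ← Real.rpow_one_add' hxy (by norm_num)]; norm_num
    _ ≤ x * y * (x + y) := mul_le_mul_of_nonneg_left hsqrt hxy

theorem hasSum_sub_add_of_antitone {f : ℕ → ℝ} (hf : Antitone f) (hf0 : Tendsto f atTop (𝓝 0))
    (a : ℕ) : HasSum (fun n => f n - f (n + a)) (∑ i ∈ range a, f i) := by
  rw [hasSum_iff_tendsto_nat_of_nonneg fun n => sub_nonneg.mpr (hf (Nat.le_add_right n a))]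
  have hpartial : ∀ N, ∑ n ∈ range N, (f n - f (n + a)) =
      ∑ i ∈ range a, f i - ∑ i ∈ range a, f (N + i) := by
    intro N
    have h1 := sum_range_add f N a
    have h2 := sum_range_add f a N
    rw [add_comm a N] at h2
    simp only [add_comm a] at h2
    rw [sum_sub_distrib]
    linarith
  have htail : Tendsto (fun N => ∑ i ∈ range a, f (N + i)) atTop (𝓝 0) := by
    simpa using tendsto_finsetSum (range a) fun i _ => hf0.comp (tendsto_add_atTop_nat i)
  simpa [hpartial] using tendsto_const_nhds.sub htail

namespace ZetaThree

/-- `1 / (m² n)` in the coordinates `m = i + j + 1`, `n = j + 1`. -/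
noncomputable def sTerm (p : ℕ × ℕ) : ℝ := 1 / (((p.1 : ℝ) + p.2 + 1) ^ 2 * ((p.2 : ℝ) + 1))

/-- `1 / (a b (a + b))` in the coordinates `a = i + 1`, `b = j + 1`. -/
noncomputable def tTerm (p : ℕ × ℕ) : ℝ :=
  1 / (((p.1 : ℝ) + 1) * ((p.2 : ℝ) + 1) * ((p.1 : ℝ) + p.2 + 2))

theorem sTerm_nonneg (p : ℕ × ℕ) : 0 ≤ sTerm p := by
  unfold sTerm; positivity

theorem tTerm_eq_sTerm_add_sTerm (p : ℕ × ℕ) :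
    tTerm p = sTerm (p.1 + 1, p.2) + sTerm (p.2 + 1, p.1) := by
  obtain ⟨i, j⟩ := p
  simp only [tTerm, sTerm]
  push_cast
  field_simp
  ring

theorem tTerm_le (p : ℕ × ℕ) :
    tTerm p ≤ (((p.1 : ℝ) + 1) ^ (3 / 2 : ℝ))⁻¹ * (((p.2 : ℝ) + 1) ^ (3 / 2 : ℝ))⁻¹ := by
  rw [← mul_inv, ← Real.mul_rpow (by positivity) (by positivity), tTerm, one_div]
  apply inv_anti₀ (by positivity)
  exact (mul_rpow_three_halves_le (by positivity) (by positivity)).trans_eq (by ring)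

theorem sTerm_le_two_mul_tTerm (p : ℕ × ℕ) : sTerm p ≤ 2 * tTerm p := by
  rw [sTerm, tTerm, mul_one_div, div_le_div_iff₀ (by positivity) (by positivity), ← sub_nonneg]
  set x : ℝ := (p.1 : ℝ)
  set y : ℝ := (p.2 : ℝ)
  have key : 2 * ((x + y + 1) ^ 2 * (y + 1)) - (x + 1) * (y + 1) * (x + y + 2) =
      (y + 1) * (x ^ 2 + 2 * y ^ 2 + 3 * x * y + x + 3 * y) := by ring
  rw [one_mul, key]
  positivity

theorem summable_tTerm : Summable tTerm :=
  .of_nonneg_of_le (fun p => by unfold tTerm; positivity) tTerm_le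
    ((summable_inv_add_one_rpow (by norm_num)).mul_of_nonneg
      (summable_inv_add_one_rpow (by norm_num)) (fun _ => by positivity) fun _ => by positivity)

theorem summable_sTerm : Summable sTerm :=
  .of_nonneg_of_le sTerm_nonneg sTerm_le_two_mul_tTerm (summable_tTerm.mul_left 2)

theorem summable_sTerm_succ : Summable fun p : ℕ × ℕ => sTerm (p.1 + 1, p.2) :=
  .of_nonneg_of_le (fun _ => sTerm_nonneg _)
    (fun p => (tTerm_eq_sTerm_add_sTerm p).symm ▸ le_add_of_nonneg_right (sTerm_nonneg _))
    summable_tTerm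

theorem hasSum_tTerm_row (i : ℕ) :
    HasSum (fun j => tTerm (i, j)) ((harmonic (i + 1) : ℝ) / ((i : ℝ) + 1) ^ 2) := by
  have hf : Antitone fun n : ℕ => 1 / ((n : ℝ) + 1) := fun m n h => by dsimp only; gcongr
  have h := (hasSum_sub_add_of_antitone hf tendsto_one_div_add_atTop_nhds_zero_nat
    (i + 1)).div_const (((i : ℝ) + 1) ^ 2)
  have hterm (j : ℕ) : tTerm (i, j) =
      (1 / ((j : ℝ) + 1) - 1 / (((j + (i + 1) : ℕ) : ℝ) + 1)) / ((i : ℝ) + 1) ^ 2 := by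
    simp only [tTerm]
    push_cast
    field_simp
    ring
  have hval : (harmonic (i + 1) : ℝ) = ∑ k ∈ range (i + 1), 1 / ((k : ℝ) + 1) := by
    simp [harmonic]
  simpa only [hterm, hval] using h

theorem sum_antidiagonal_sTerm (m : ℕ) :
    ∑ p ∈ antidiagonal m, sTerm p = (harmonic (m + 1) : ℝ) / ((m : ℝ) + 1) ^ 2 := by
  have hterm : ∀ p ∈ antidiagonal m, sTerm p.swap = 1 / ((p.1 : ℝ) + 1) / ((m : ℝ) + 1) ^ 2 := by
    rintro ⟨i, j⟩ h
    rw [HasAntidiagonal.mem_antidiagonal] at h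
    subst h
    simp only [sTerm, Prod.swap]
    push_cast
    field_simp
    ring
  rw [← Nat.sum_antidiagonal_swap, sum_congr rfl hterm, ← sum_div,
    Nat.sum_antidiagonal_eq_sum_range_succ (fun i _ => 1 / ((i : ℝ) + 1))]
  simp [harmonic]

theorem hasSum_sTerm_antidiagonal :
    HasSum (fun m : ℕ => (harmonic (m + 1) : ℝ) / ((m : ℝ) + 1) ^ 2) (∑' p, sTerm p) := by
  have h := HasAntidiagonal.sigmaAntidiagonalEquivProd.hasSum_iff.mpr summable_sTerm.hasSum
  refine h.sigma fun m => ?_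
  rw [← sum_antidiagonal_sTerm]
  exact (antidiagonal m).hasSum sTerm

theorem tsum_tTerm_eq_tsum_sTerm : ∑' p, tTerm p = ∑' p, sTerm p :=
  (summable_tTerm.hasSum.prod_fiberwise hasSum_tTerm_row).unique hasSum_sTerm_antidiagonal

theorem tsum_tTerm : ∑' p, tTerm p = 2 * ∑' p : ℕ × ℕ, sTerm (p.1 + 1, p.2) := by
  have hswap : ∑' p : ℕ × ℕ, sTerm (p.2 + 1, p.1) = ∑' p : ℕ × ℕ, sTerm (p.1 + 1, p.2) :=
    (Equiv.prodComm ℕ ℕ).tsum_eq fun p => sTerm (p.1 + 1, p.2)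
  have hs : Summable fun p : ℕ × ℕ => sTerm (p.2 + 1, p.1) :=
    (Equiv.prodComm ℕ ℕ).summable_iff.mpr summable_sTerm_succ
  rw [tsum_congr tTerm_eq_sTerm_add_sTerm, summable_sTerm_succ.tsum_add hs, hswap, two_mul]

theorem tsum_sTerm : ∑' p, sTerm p =
    ∑' n : ℕ, 1 / ((n : ℝ) + 1) ^ 3 + ∑' p : ℕ × ℕ, sTerm (p.1 + 1, p.2) := by
  rw [summable_sTerm.tsum_prod, summable_sTerm.prod.tsum_eq_zero_add, summable_sTerm_succ.tsum_prod]
  congr 1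
  exact tsum_congr fun n => by simp only [sTerm]; push_cast; ring_nf

def pairsEquiv : ℕ × ℕ ≃ {q : ℕ × ℕ // 1 ≤ q.2 ∧ q.2 ≤ q.1} where
  toFun p := ⟨(p.1 + p.2 + 1, p.2 + 1), by omega⟩
  invFun q := (q.1.1 - q.1.2, q.1.2 - 1)
  left_inv p := by simp
  right_inv q := by ext <;> simp only <;> omega

end ZetaThree

/-- The double sum over pairs m ≥ n ≥ 1 of 1/(m²n) converges and equals 2ζ(3). -/
theorem double_sum_eq_two_zeta_three :
    HasSum (fun p : {q : ℕ × ℕ // 1 ≤ q.2 ∧ q.2 ≤ q.1} =>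
        (1 : ℝ) / ((p.1.1 : ℝ) ^ 2 * (p.1.2 : ℝ)))
      (2 * ∑' n : ℕ, (1 : ℝ) / ((n : ℝ) + 1) ^ 3) := by
  have hS : ∑' p, ZetaThree.sTerm p = 2 * ∑' n : ℕ, (1 : ℝ) / ((n : ℝ) + 1) ^ 3 := by
    linarith [ZetaThree.tsum_tTerm_eq_tsum_sTerm, ZetaThree.tsum_tTerm, ZetaThree.tsum_sTerm]
  rw [← ZetaThree.pairsEquiv.hasSum_iff, ← hS]
  convert ZetaThree.summable_sTerm.hasSum using 1
  funext p
  simp [ZetaThree.pairsEquiv, ZetaThree.sTerm]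
end

section
/- For every integer k ≥ 1, the extended multiple zeta value ζ^{ℓsℓs...ℓsℓ}_{21...1} (weight 2k+1, depth 2k, first exponent 2 followed by 2k−1 ones, inequality pattern alternating ℓ,s,ℓ,s,...,ℓ) equals ζ^{ℓ...ℓ}_{2...21} (k twos followed by a one, all inequalities non-strict). Explicitly: Σ_{k₁ ≥ k₂ > k₃ ≥ k₄ > ... ≥ k_{2k} ≥ 1} 1/(k₁² k₂ k₃ ⋯ k_{2k}) = Σ_{m₁ ≥ m₂ ≥ ... ≥ m_{k+1} ≥ 1} 1/(m₁² m₂² ⋯ m_k² m_{k+1}). -/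
/-!
Let `C(m, n) = m! n! / (m + n)! = 1 / binom(m + n, m)`. It telescopes,
`∑_{m > M} C(m, n) / m = C(M, n) / n` for `n ≥ 1`, and
`C(a, b + 1) / (b + 1) = C(a + 1, b) / (a + 1)`.
Together these give the transport relation `∑_{a ≥ d > p} C(a, ν) / (a d) = ∑_{x ≥ ν} C(p, x) / x²`:
across the connector `C`, the top pair `a ≥ d` of an alternating chain is traded for one new bottom
entry `x` of a non-strict chain with exponent `2`. Iterating, if `w_j(p)` is the weight of the
alternating chains of length `2j` with top `p` and `Z_j(ν) = ∑_{m₁ ≥ ⋯ ≥ m_j ≥ ν} 1 / (m₁ ⋯ m_j)²`,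
then `∑_p w_j(p) C(p, ν) = Z_j(ν)`. The theorem follows by writing the extra factor `1 / c₀` of the
left-hand side as `∑_{x ≥ 1} C(c₀, x) / x`: the new variable `x` is the last entry `m_{k+1}` on the
right. All sums are taken in `ℝ≥0∞`, where they may be reordered freely.
-/

open Filter Topology
open scoped ENNReal

theorem ENNReal.tsum_eq_of_add_eq {f u : ℕ → ℝ≥0∞} (h : ∀ i, f i + u (i + 1) = u i)
    (hu : Tendsto u atTop (𝓝 0)) : ∑' i, f i = u 0 := by
  have partial_sum : ∀ N, ∑ i ∈ Finset.range N, f i + u N = u 0 := by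
    intro N
    induction N with
    | zero => simp
    | succ N ih => rw [Finset.sum_range_succ, add_assoc, h, ih]
  have hlim := (ENNReal.tendsto_nat_tsum f).add hu
  rw [add_zero] at hlim
  exact tendsto_nhds_unique hlim (by simp only [partial_sum, tendsto_const_nhds])

theorem ENNReal.tsum_ite_lt (M : ℕ) (f : ℕ → ℝ≥0∞) :
    ∑' m, (if M < m then f m else 0) = ∑' i, f (i + (M + 1)) := by
  rw [← ENNReal.summable.sum_add_tsum_nat_add' (k := M + 1),
    Finset.sum_eq_zero (fun i hi => if_neg (by simp at hi; omega)), zero_add]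
  exact tsum_congr fun i => if_pos (by omega)

theorem ENNReal.tsum_fin_cons {α : Type*} {n : ℕ} (f : (Fin (n + 1) → α) → ℝ≥0∞) :
    ∑' c, f c = ∑' a, ∑' t, f (Fin.cons a t) := by
  rw [← (Fin.consEquiv fun _ => α).tsum_eq, ENNReal.tsum_prod']
  rfl

theorem ENNReal.tsum_fin_snoc {α : Type*} {n : ℕ} (f : (Fin (n + 1) → α) → ℝ≥0∞) :
    ∑' c, f c = ∑' a, ∑' t, f (Fin.snoc t a) := by
  rw [← (Fin.snocEquiv fun _ => α).tsum_eq, ENNReal.tsum_prod']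
  rfl

lemma ENNReal.tsum_subtype_toReal {α : Type*} (P : α → Prop) [DecidablePred P] (f : α → ℝ≥0∞)
    (hf : ∀ a, P a → f a ≠ ∞) :
    ∑' a : {a // P a}, (f a).toReal = (∑' a, if P a then f a else 0).toReal := by
  rw [← ENNReal.tsum_toReal_eq fun a : {a // P a} => hf a.1 a.2]
  congr 1
  exact (tsum_subtype {a | P a} f).trans (tsum_congr fun a => Set.indicator_apply _ _ _)

lemma ENNReal.inv_natCast_eq_mul_inv_natCast_mul {x : ℕ} (hx : x ≠ 0) (y : ℕ) :
    (y : ℝ≥0∞)⁻¹ = x * ((x * y : ℕ) : ℝ≥0∞)⁻¹ := by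
  rw [Nat.cast_mul, ENNReal.mul_inv (by simp) (by simp), ← mul_assoc,
    ENNReal.mul_inv_cancel (by simpa using hx) (by simp), one_mul]

lemma Fin.antitone_snoc_iff {α : Type*} [Preorder α] {n : ℕ} {w : Fin n → α} {x : α} :
    Antitone (Fin.snoc w x : Fin (n + 1) → α) ↔ Antitone w ∧ ∀ i, x ≤ w i := by
  constructor
  · intro h
    refine ⟨fun i i' hii' => ?_, fun i => ?_⟩
    · simpa using h (Fin.castSucc_le_castSucc_iff.mpr hii')
    · simpa using h (Fin.castSucc_lt_last i).le
  · rintro ⟨hw, hx⟩ i i' hii'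
    induction i' using Fin.lastCases with
    | last =>
      induction i using Fin.lastCases with
      | last => rfl
      | cast i => simpa using hx i
    | cast i' =>
      induction i using Fin.lastCases with
      | last => exact absurd hii' (not_le.mpr (Fin.castSucc_lt_last i'))
      | cast i => simpa using hw (Fin.castSucc_le_castSucc_iff.mp hii')

lemma Fin.forall_succ_le_castSucc_and_le_last_iff {α : Type*} [Preorder α] {n : ℕ}
    {m : Fin (n + 1) → α} {ν : α} :
    ((∀ i : Fin n, m i.succ ≤ m i.castSucc) ∧ ν ≤ m (Fin.last n)) ↔
      (∀ i, ν ≤ m i) ∧ Antitone m := by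
  rw [← Fin.antitone_iff_succ_le]
  exact ⟨fun ⟨hm, hν⟩ => ⟨fun i => hν.trans (hm (Fin.le_last i)), hm⟩,
    fun ⟨hν, hm⟩ => ⟨hm, hν _⟩⟩

noncomputable def connector (m n : ℕ) : ℝ≥0∞ := ((m + n).choose m : ℝ≥0∞)⁻¹

lemma connector_comm (m n : ℕ) : connector m n = connector n m := by
  rw [connector, connector, add_comm, Nat.choose_symm_add]

@[simp] lemma connector_zero_left (n : ℕ) : connector 0 n = 1 := by simp [connector]

@[simp] lemma connector_zero_right (m : ℕ) : connector m 0 = 1 := by simp [connector]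

lemma connector_le (m : ℕ) {n : ℕ} (hn : 0 < n) : connector m n ≤ ((m + 1 : ℕ) : ℝ≥0∞)⁻¹ := by
  rw [connector, ENNReal.inv_le_inv, Nat.cast_le]
  calc m + 1 = (m + 1).choose m := by simp
    _ ≤ (m + n).choose m := Nat.choose_le_choose m (by omega)

lemma tendsto_connector_atTop {n : ℕ} (hn : 0 < n) : Tendsto (connector · n) atTop (𝓝 0) :=
  tendsto_of_tendsto_of_tendsto_of_le_of_le tendsto_const_nhds
    (ENNReal.tendsto_inv_nat_nhds_zero.comp (tendsto_add_atTop_nat 1)) (fun _ => zero_le)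
    (fun m => connector_le m hn)

lemma connector_eq_add_connector_succ_left (m n : ℕ) :
    connector m n = n * (connector (m + 1) n * ((m + 1 : ℕ) : ℝ≥0∞)⁻¹) + connector (m + 1) n := by
  -- common denominator `D = (m + n + 1) * binom(m + n, m) = (m + 1) * binom(m + n + 1, m + 1)`
  have key := Nat.add_one_mul_choose_eq (m + n) m
  set D := (m + n + 1) * (m + n).choose m
  have hsucc : connector (m + 1) n = (m + 1 : ℕ) * (D : ℝ≥0∞)⁻¹ := by
    rw [connector, show m + 1 + n = m + n + 1 by omega,
      ENNReal.inv_natCast_eq_mul_inv_natCast_mul (x := m + 1) (by omega), mul_comm (m + 1), ← key]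
  have hself : connector m n = (m + n + 1 : ℕ) * (D : ℝ≥0∞)⁻¹ :=
    ENNReal.inv_natCast_eq_mul_inv_natCast_mul (x := m + n + 1) (by omega) _
  symm
  rw [hsucc, hself, mul_comm _ (D : ℝ≥0∞)⁻¹, mul_assoc,
    ENNReal.mul_inv_cancel (by simp) (by simp), mul_one, mul_comm (D : ℝ≥0∞)⁻¹, ← add_mul]
  push_cast
  ring

lemma connector_succ_right_mul_inv (a b : ℕ) :
    connector a (b + 1) * ((b + 1 : ℕ) : ℝ≥0∞)⁻¹
      = connector (a + 1) b * ((a + 1 : ℕ) : ℝ≥0∞)⁻¹ := by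
  have key := Nat.choose_succ_right_eq (a + b + 1) a
  rw [show a + b + 1 - a = b + 1 by omega] at key
  rw [connector, connector, ← ENNReal.mul_inv (by simp) (by simp),
    ← ENNReal.mul_inv (by simp) (by simp), show a + (b + 1) = a + b + 1 by omega,
    show a + 1 + b = a + b + 1 by omega]
  exact_mod_cast congrArg (fun x : ℕ => (x : ℝ≥0∞)⁻¹) key.symm

lemma tsum_connector_left_mul_inv (M : ℕ) {n : ℕ} (hn : 0 < n) :
    ∑' m, (if M < m then connector m n * (m : ℝ≥0∞)⁻¹ else 0) = connector M n * (n : ℝ≥0∞)⁻¹ := by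
  have telescope : ∑' i, n * (connector (i + (M + 1)) n * ((i + (M + 1) : ℕ) : ℝ≥0∞)⁻¹)
      = connector M n := by
    refine (ENNReal.tsum_eq_of_add_eq (u := fun i => connector (i + M) n) (fun i => ?_)
      ((tendsto_connector_atTop hn).comp (tendsto_add_atTop_nat M))).trans (by simp)
    simpa only [← add_assoc, add_right_comm i 1 M] using
      (connector_eq_add_connector_succ_left (i + M) n).symm
  rw [ENNReal.tsum_ite_lt, ← telescope, ENNReal.tsum_mul_left, mul_comm, ← mul_assoc,
    ENNReal.inv_mul_cancel (by simpa using hn.ne') (by simp), one_mul]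

lemma tsum_connector_right_mul_inv {m : ℕ} (hm : 0 < m) (M : ℕ) :
    ∑' n, (if M < n then connector m n * (n : ℝ≥0∞)⁻¹ else 0) = connector m M * (m : ℝ≥0∞)⁻¹ := by
  simp only [connector_comm m]
  exact tsum_connector_left_mul_inv M hm

lemma tsum_tsum_inv_mul_connector (p : ℕ) {ν : ℕ} (hν : 0 < ν) :
    ∑' a, ∑' d, (if p < d ∧ d ≤ a then (a : ℝ≥0∞)⁻¹ * (d : ℝ≥0∞)⁻¹ * connector a ν else 0)
      = ∑' x, if ν ≤ x then ((x : ℝ≥0∞) ^ 2)⁻¹ * connector p x else 0 := by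
  obtain ⟨ν, rfl⟩ := Nat.exists_eq_add_of_lt hν
  simp only [zero_add]
  trans ∑' m, if p < m then (m : ℝ≥0∞)⁻¹ * (connector m ν * (m : ℝ≥0∞)⁻¹) else 0
  · rw [ENNReal.tsum_comm]
    refine tsum_congr fun d => ?_
    split_ifs with hd
    · obtain ⟨e, rfl⟩ : ∃ e, d = e + 1 := ⟨d - 1, by omega⟩
      have hsplit : ∀ a, (if p < e + 1 ∧ e + 1 ≤ a then
            (a : ℝ≥0∞)⁻¹ * ((e + 1 : ℕ) : ℝ≥0∞)⁻¹ * connector a (ν + 1) else 0)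
          = ((e + 1 : ℕ) : ℝ≥0∞)⁻¹ * if e < a then connector a (ν + 1) * (a : ℝ≥0∞)⁻¹ else 0 := by
        intro a
        by_cases ha : e < a
        · rw [if_pos ⟨hd, ha⟩, if_pos ha]; ring
        · rw [if_neg (by omega), if_neg ha, mul_zero]
      rw [tsum_congr hsplit, ENNReal.tsum_mul_left, tsum_connector_left_mul_inv e (Nat.succ_pos ν),
        connector_succ_right_mul_inv]
    · simp [hd]
  · have hleft : ∀ m, (if p < m then (m : ℝ≥0∞)⁻¹ * (connector m ν * (m : ℝ≥0∞)⁻¹) else 0)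
        = ∑' x, if p < m ∧ ν < x then (m : ℝ≥0∞)⁻¹ * (x : ℝ≥0∞)⁻¹ * connector m x else 0 := by
      intro m
      by_cases hm : p < m
      · rw [if_pos hm, ← tsum_connector_right_mul_inv (by omega) ν, ← ENNReal.tsum_mul_left]
        refine tsum_congr fun x => ?_
        by_cases hx : ν < x
        · rw [if_pos hx, if_pos ⟨hm, hx⟩]; ring
        · rw [if_neg hx, if_neg (by tauto), mul_zero]
      · simp [hm]
    have hright : ∀ x, (if ν + 1 ≤ x then ((x : ℝ≥0∞) ^ 2)⁻¹ * connector p x else 0)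
        = ∑' m, if p < m ∧ ν < x then (m : ℝ≥0∞)⁻¹ * (x : ℝ≥0∞)⁻¹ * connector m x else 0 := by
      intro x
      by_cases hx : ν < x
      · rw [if_pos (show ν + 1 ≤ x from hx), ENNReal.inv_pow, sq, mul_assoc, mul_comm, mul_assoc,
          ← tsum_connector_left_mul_inv p (by omega : 0 < x), ← ENNReal.tsum_mul_left]
        refine tsum_congr fun m => ?_
        by_cases hm : p < m
        · rw [if_pos hm, if_pos ⟨hm, hx⟩]; ring
        · rw [if_neg hm, if_neg (by tauto), mul_zero]
      · simp [hx]
    rw [tsum_congr hleft, tsum_congr hright, ENNReal.tsum_comm]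

section Chains

open scoped Classical

def IsAltChain {n : ℕ} (m : Fin n → ℕ) : Prop :=
  ∀ i j : Fin n, j.val = i.val + 1 → if i.val % 2 = 0 then m j ≤ m i else m j < m i

lemma IsAltChain.antitone {n : ℕ} {m : Fin n → ℕ} (h : IsAltChain m) : Antitone m := by
  cases n with
  | zero => exact fun i => i.elim0
  | succ n =>
    refine Fin.antitone_iff_succ_le.mpr fun i => ?_
    have := h i.castSucc i.succ (by simp)
    split_ifs at this <;> omega

lemma isAltChain_cons_cons {n : ℕ} (a d : ℕ) (c : Fin n → ℕ) :
    IsAltChain (Fin.cons a (Fin.cons d c) : Fin (n + 2) → ℕ) ↔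
      d ≤ a ∧ (∀ i, c i < d) ∧ IsAltChain c := by
  constructor
  · intro h
    have tail : IsAltChain c := fun i j hij => by
      have := h i.succ.succ j.succ.succ (by simp [hij])
      simpa [show (i.val + 1 + 1) % 2 = i.val % 2 by omega] using this
    refine ⟨by simpa using h 0 1 rfl, fun i => ?_, tail⟩
    cases n with
    | zero => exact i.elim0
    | succ n =>
      have h12 := h (Fin.succ 0) (Fin.succ (Fin.succ 0)) rfl
      simp only [Fin.val_succ, Fin.val_zero, Fin.cons_succ, Fin.cons_zero] at h12
      exact (tail.antitone (Fin.zero_le i)).trans_lt h12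
  · rintro ⟨hda, hcd, hc⟩ ⟨i, hi⟩ ⟨j, hj⟩ (hij : j = i + 1)
    subst hij
    match i with
    | 0 => simpa using hda
    | 1 =>
      show c ⟨0, by omega⟩ < d
      exact hcd _
    | i + 2 =>
      have := hc ⟨i, by omega⟩ ⟨i + 1, by omega⟩ rfl
      rw [show (i + 2) % 2 = i % 2 by omega]
      exact this

/-- `altWeight j p` is the total weight `∏ 1 / cᵢ` of the chains
`c₀ ≥ c₁ > c₂ ≥ ⋯ ≥ c_{2j-1} > 0` with top element `c₀ = p`; the empty chain has top `0`. -/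
noncomputable def altWeight : ℕ → ℕ → ℝ≥0∞
  | 0, p => if p = 0 then 1 else 0
  | j + 1, a => ∑' d, ∑' p,
      if p < d ∧ d ≤ a then (a : ℝ≥0∞)⁻¹ * (d : ℝ≥0∞)⁻¹ * altWeight j p else 0

lemma altWeight_succ_zero (j : ℕ) : altWeight (j + 1) 0 = 0 :=
  ENNReal.tsum_eq_zero.mpr fun _ => ENNReal.tsum_eq_zero.mpr fun _ => if_neg (by omega)

noncomputable def altChainSum (j b : ℕ) : ℝ≥0∞ :=
  ∑' c : Fin (2 * j) → ℕ, if (∀ i, 1 ≤ c i ∧ c i < b) ∧ IsAltChain c then ∏ i, (c i : ℝ≥0∞)⁻¹ else 0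

lemma tsum_altChain_cons_cons (j : ℕ) (φ : ℕ → ℝ≥0∞) :
    ∑' c : Fin (2 * j + 2) → ℕ,
        (if (∀ i, 1 ≤ c i) ∧ IsAltChain c then φ (c ⟨0, by omega⟩) * ∏ i, (c i : ℝ≥0∞)⁻¹ else 0)
      = ∑' a, ∑' d, if 0 < d ∧ d ≤ a then
          φ a * ((a : ℝ≥0∞)⁻¹ * (d : ℝ≥0∞)⁻¹ * altChainSum j d) else 0 := by
  rw [ENNReal.tsum_fin_cons]
  simp_rw [ENNReal.tsum_fin_cons (n := 2 * j)]
  refine tsum_congr fun a => tsum_congr fun d => ?_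
  have hcond : ∀ t : Fin (2 * j) → ℕ,
      (∀ i, 1 ≤ (Fin.cons a (Fin.cons d t) : Fin (2 * j + 2) → ℕ) i) ∧
          IsAltChain (Fin.cons a (Fin.cons d t) : Fin (2 * j + 2) → ℕ) ↔
        (0 < d ∧ d ≤ a) ∧ (∀ i, 1 ≤ t i ∧ t i < d) ∧ IsAltChain t := by
    intro t
    simp only [isAltChain_cons_cons, Fin.forall_fin_succ, Fin.cons_zero, Fin.cons_succ, forall_and]
    constructor
    · rintro ⟨⟨-, hd, ht⟩, hda, htd, halt⟩
      exact ⟨⟨hd, hda⟩, ⟨ht, htd⟩, halt⟩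
    · rintro ⟨⟨hd, hda⟩, ⟨ht, htd⟩, halt⟩
      exact ⟨⟨by omega, hd, ht⟩, hda, htd, halt⟩
  simp only [hcond, Fin.prod_univ_succ, Fin.cons_zero, Fin.cons_succ, Fin.zero_eta]
  by_cases had : 0 < d ∧ d ≤ a
  · simp only [had, true_and, if_true, altChainSum, ← ENNReal.tsum_mul_left, mul_ite, mul_zero]
    exact tsum_congr fun t => by split_ifs <;> ring
  · simp [had]

lemma altChainSum_zero {b : ℕ} (hb : 0 < b) :
    altChainSum 0 b = ∑' p, if p < b then altWeight 0 p else 0 := by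
  rw [tsum_eq_single 0 fun p hp => by simp [hp, altWeight]]
  simp [altChainSum, altWeight, IsAltChain, hb]

lemma altChainSum_succ (j b : ℕ) :
    altChainSum (j + 1) b = ∑' c : Fin (2 * j + 2) → ℕ,
      if (∀ i, 1 ≤ c i) ∧ IsAltChain c then
        (if c ⟨0, by omega⟩ < b then 1 else 0) * ∏ i, (c i : ℝ≥0∞)⁻¹ else 0 := by
  change ∑' c : Fin (2 * j + 2) → ℕ,
    (if (∀ i, 1 ≤ c i ∧ c i < b) ∧ IsAltChain c then ∏ i, (c i : ℝ≥0∞)⁻¹ else 0) = _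
  refine tsum_congr fun c => ?_
  have hcond : ((∀ i, 1 ≤ c i ∧ c i < b) ∧ IsAltChain c) ↔
      ((∀ i, 1 ≤ c i) ∧ IsAltChain c) ∧ c ⟨0, by omega⟩ < b := by
    simp only [forall_and]
    exact ⟨fun ⟨⟨h1, hb⟩, halt⟩ => ⟨⟨h1, halt⟩, hb _⟩,
      fun ⟨⟨h1, halt⟩, hb⟩ => ⟨⟨h1, fun i => (halt.antitone (Fin.zero_le i)).trans_lt hb⟩, halt⟩⟩
  simp only [hcond, ite_and]
  split_ifs <;> simp

lemma tsum_altChain_mul_of_altChainSum (j : ℕ)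
    (hj : ∀ d, 0 < d → altChainSum j d = ∑' p, if p < d then altWeight j p else 0)
    (φ : ℕ → ℝ≥0∞) :
    ∑' c : Fin (2 * j + 2) → ℕ,
        (if (∀ i, 1 ≤ c i) ∧ IsAltChain c then φ (c ⟨0, by omega⟩) * ∏ i, (c i : ℝ≥0∞)⁻¹ else 0)
      = ∑' a, φ a * altWeight (j + 1) a := by
  rw [tsum_altChain_cons_cons]
  refine tsum_congr fun a => ?_
  simp only [altWeight, ← ENNReal.tsum_mul_left]
  refine tsum_congr fun d => ?_
  by_cases hd : 0 < d ∧ d ≤ a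
  · rw [if_pos hd, hj d hd.1, ← ENNReal.tsum_mul_left, ← ENNReal.tsum_mul_left]
    refine tsum_congr fun p => ?_
    by_cases hp : p < d
    · rw [if_pos hp, if_pos ⟨hp, hd.2⟩, mul_assoc]
    · rw [if_neg hp, if_neg (by tauto), mul_zero, mul_zero]
  · rw [if_neg hd]
    exact (ENNReal.tsum_eq_zero.mpr fun p => by rw [if_neg (by omega), mul_zero]).symm

theorem tsum_altChain_mul (j : ℕ) (φ : ℕ → ℝ≥0∞) :
    ∑' c : Fin (2 * j + 2) → ℕ,
        (if (∀ i, 1 ≤ c i) ∧ IsAltChain c then φ (c ⟨0, by omega⟩) * ∏ i, (c i : ℝ≥0∞)⁻¹ else 0)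
      = ∑' a, φ a * altWeight (j + 1) a := by
  induction j generalizing φ with
  | zero => exact tsum_altChain_mul_of_altChainSum 0 (fun d hd => altChainSum_zero hd) φ
  | succ j ih =>
    refine tsum_altChain_mul_of_altChainSum (j + 1) (fun d _ => ?_) φ
    rw [altChainSum_succ]
    refine (ih fun a => if a < d then 1 else 0).trans ?_
    simp only [ite_mul, one_mul, zero_mul]

noncomputable def weakChainSum (j ν : ℕ) : ℝ≥0∞ :=
  ∑' w : Fin j → ℕ, if (∀ i, ν ≤ w i) ∧ Antitone w then ∏ i, ((w i : ℝ≥0∞) ^ 2)⁻¹ else 0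

lemma tsum_weakChain_snoc (j ν : ℕ) (φ : ℕ → ℝ≥0∞) :
    ∑' w : Fin (j + 1) → ℕ, (if (∀ i, ν ≤ w i) ∧ Antitone w then
        φ (w (Fin.last j)) * ∏ i : Fin j, ((w i.castSucc : ℝ≥0∞) ^ 2)⁻¹ else 0)
      = ∑' x, if ν ≤ x then φ x * weakChainSum j x else 0 := by
  rw [ENNReal.tsum_fin_snoc]
  refine tsum_congr fun x => ?_
  have hcond : ∀ w : Fin j → ℕ, ((∀ i, ν ≤ (Fin.snoc w x : Fin (j + 1) → ℕ) i) ∧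
      Antitone (Fin.snoc w x : Fin (j + 1) → ℕ)) ↔ ν ≤ x ∧ (∀ i, x ≤ w i) ∧ Antitone w := by
    intro w
    simp only [Fin.antitone_snoc_iff, Fin.forall_fin_succ', Fin.snoc_castSucc, Fin.snoc_last]
    constructor
    · rintro ⟨⟨-, hνx⟩, hw, hxw⟩
      exact ⟨hνx, hxw, hw⟩
    · rintro ⟨hνx, hxw, hw⟩
      exact ⟨⟨fun i => hνx.trans (hxw i), hνx⟩, hw, hxw⟩
  simp only [hcond, Fin.snoc_castSucc, Fin.snoc_last]
  by_cases hx : ν ≤ x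
  · simp only [hx, true_and, if_true, weakChainSum, ← ENNReal.tsum_mul_left, mul_ite, mul_zero]
  · simp [hx]

lemma weakChainSum_zero (ν : ℕ) : weakChainSum 0 ν = 1 := by
  simp [weakChainSum, Subsingleton.antitone]

lemma weakChainSum_succ (j ν : ℕ) : weakChainSum (j + 1) ν
    = ∑' x, if ν ≤ x then ((x : ℝ≥0∞) ^ 2)⁻¹ * weakChainSum j x else 0 := by
  rw [← tsum_weakChain_snoc, weakChainSum]
  refine tsum_congr fun w => ?_
  rw [Fin.prod_univ_castSucc, mul_comm]

end Chains

theorem tsum_altWeight_mul_connector (j : ℕ) {ν : ℕ} (hν : 0 < ν) :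
    ∑' p, altWeight j p * connector p ν = weakChainSum j ν := by
  induction j generalizing ν with
  | zero => simp [altWeight, weakChainSum_zero, ite_mul]
  | succ j ih =>
    calc ∑' a, altWeight (j + 1) a * connector a ν
        = ∑' p, altWeight j p * ∑' a, ∑' d,
            if p < d ∧ d ≤ a then (a : ℝ≥0∞)⁻¹ * (d : ℝ≥0∞)⁻¹ * connector a ν else 0 := by
          simp only [altWeight, ← ENNReal.tsum_mul_right, ← ENNReal.tsum_mul_left, ite_mul,
            mul_ite, zero_mul, mul_zero]
          rw [tsum_congr fun a => ENNReal.tsum_comm, ENNReal.tsum_comm]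
          refine tsum_congr fun p => tsum_congr fun a => tsum_congr fun d => ?_
          split_ifs
          · ring
          · rfl
      _ = ∑' p, altWeight j p * ∑' x, if ν ≤ x then ((x : ℝ≥0∞) ^ 2)⁻¹ * connector p x else 0 := by
          simp only [tsum_tsum_inv_mul_connector _ hν]
      _ = ∑' x, if ν ≤ x then ((x : ℝ≥0∞) ^ 2)⁻¹ * ∑' p, altWeight j p * connector p x else 0 := by
          simp only [← ENNReal.tsum_mul_left, mul_ite, mul_zero]
          rw [ENNReal.tsum_comm]
          refine tsum_congr fun x => ?_
          split_ifs
          · exact tsum_congr fun p => by ring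
          · exact tsum_zero
      _ = weakChainSum (j + 1) ν := by
          rw [weakChainSum_succ]
          refine tsum_congr fun x => ?_
          split_ifs with hx
          · rw [ih (by omega)]
          · rfl

theorem tsum_inv_mul_altWeight (j : ℕ) :
    ∑' a : ℕ, (a : ℝ≥0∞)⁻¹ * altWeight (j + 1) a
      = ∑' x : ℕ, if 1 ≤ x then (x : ℝ≥0∞)⁻¹ * weakChainSum (j + 1) x else 0 := by
  have hinv : ∀ a : ℕ, (a : ℝ≥0∞)⁻¹ * altWeight (j + 1) a
      = ∑' x : ℕ, if 0 < x then (x : ℝ≥0∞)⁻¹ * (altWeight (j + 1) a * connector a x) else 0 := by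
    intro a
    rcases Nat.eq_zero_or_pos a with rfl | ha
    · simp [altWeight_succ_zero]
    · have h := tsum_connector_right_mul_inv ha 0
      rw [connector_zero_right, one_mul] at h
      rw [← h, ← ENNReal.tsum_mul_right]
      refine tsum_congr fun x => ?_
      split_ifs
      · ring
      · rw [zero_mul]
  rw [tsum_congr hinv, ENNReal.tsum_comm]
  refine tsum_congr fun x => ?_
  rcases Nat.eq_zero_or_pos x with rfl | hx
  · simp
  · simp only [hx, if_true, show 1 ≤ x from hx, ENNReal.tsum_mul_left,
      tsum_altWeight_mul_connector _ hx]

lemma tsum_one_div_altChain (j : ℕ) :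
    ∑' m : {m : Fin (2 * j + 2) → ℕ // (∀ i, 1 ≤ m i) ∧ IsAltChain m},
        (1 : ℝ) / ((m.1 ⟨0, by omega⟩ : ℝ) * ∏ i, (m.1 i : ℝ))
      = (∑' a : ℕ, (a : ℝ≥0∞)⁻¹ * altWeight (j + 1) a).toReal := by
  classical
  rw [← tsum_altChain_mul, ← ENNReal.tsum_subtype_toReal
    (fun c : Fin (2 * j + 2) → ℕ => (∀ i, 1 ≤ c i) ∧ IsAltChain c)
    (fun c => (c ⟨0, by omega⟩ : ℝ≥0∞)⁻¹ * ∏ i, (c i : ℝ≥0∞)⁻¹) fun c hc => ?_]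
  · refine tsum_congr fun m => ?_
    simp [ENNReal.toReal_prod, one_div, mul_comm]
  · have hne : ∀ i, c i ≠ 0 := fun i => Nat.one_le_iff_ne_zero.mp (hc.1 i)
    exact ENNReal.mul_ne_top (by simpa using hne _)
      (ENNReal.prod_ne_top fun i _ => by simpa using hne i)

lemma tsum_one_div_weakChain (k : ℕ) :
    ∑' m : {m : Fin (k + 1) → ℕ // (∀ i : Fin k, m i.succ ≤ m i.castSucc) ∧ 1 ≤ m (Fin.last k)},
        (1 : ℝ) / ((∏ i : Fin k, (m.1 i.castSucc : ℝ) ^ 2) * (m.1 (Fin.last k) : ℝ))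
      = (∑' x : ℕ, if 1 ≤ x then (x : ℝ≥0∞)⁻¹ * weakChainSum k x else 0).toReal := by
  classical
  rw [← tsum_weakChain_snoc k 1 fun x : ℕ => (x : ℝ≥0∞)⁻¹]
  simp only [← Fin.forall_succ_le_castSucc_and_le_last_iff]
  rw [← ENNReal.tsum_subtype_toReal (fun w : Fin (k + 1) → ℕ =>
      (∀ i : Fin k, w i.succ ≤ w i.castSucc) ∧ 1 ≤ w (Fin.last k))
    (fun w => (w (Fin.last k) : ℝ≥0∞)⁻¹ * ∏ i : Fin k, ((w i.castSucc : ℝ≥0∞) ^ 2)⁻¹)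
    fun w hw => ?_]
  · refine tsum_congr fun m => ?_
    simp [ENNReal.toReal_prod, one_div, mul_comm]
  · have hne : ∀ i, w i ≠ 0 := fun i =>
      Nat.one_le_iff_ne_zero.mp ((Fin.forall_succ_le_castSucc_and_le_last_iff.mp hw).1 i)
    exact ENNReal.mul_ne_top (by simpa using hne _)
      (ENNReal.prod_ne_top fun i _ => by simpa using hne _)

/-- The extended MZV ζ^{(ℓs)^{k-1}ℓ}_{2 1...1} (one 2 followed by 2k-1 ones, inequality
pattern alternating ℓ,s,...,ℓ) equals ζ^{ℓ...ℓ}_{2...2 1} (k twos then a one, all non-strict). -/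
theorem extended_mzv_alternating_eq_all_large (k : ℕ) (hk : 1 ≤ k) :
    (∑' m : {m : Fin (2 * k) → ℕ // (∀ i, 1 ≤ m i) ∧
        ∀ i j : Fin (2 * k), j.val = i.val + 1 →
          (if i.val % 2 = 0 then m j ≤ m i else m j < m i)},
      (1 : ℝ) / ((m.1 ⟨0, by omega⟩ : ℝ) * ∏ j, (m.1 j : ℝ)))
      = ∑' m : {m : Fin (k + 1) → ℕ //
          (∀ i : Fin k, m i.succ ≤ m i.castSucc) ∧ 1 ≤ m (Fin.last k)},
        (1 : ℝ) / ((∏ j : Fin k, ((m.1 j.castSucc : ℝ)) ^ 2) * (m.1 (Fin.last k) : ℝ)) := by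
  obtain ⟨j, rfl⟩ : ∃ j, k = j + 1 := ⟨k - 1, by omega⟩
  exact (tsum_one_div_altChain j).trans <|
    (congrArg ENNReal.toReal (tsum_inv_mul_altWeight j)).trans (tsum_one_div_weakChain (j + 1)).symm
end

section
/- For every integer r ≥ 1, the multiple zeta value ζ(2,2,...,2) with r twos (and all inequalities strict, i.e. Σ_{k₁ > k₂ > ... > k_r ≥ 1} 1/(k₁²⋯k_r²)) equals π^{2r}/(2r+1)!. -/
/-!
Euler's product `sinh (π x) / (π x) = ∏_{k ≥ 1} (1 + x² / k²)` expands, after collecting the terms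
of degree `2r` (a rearrangement of nonnegative terms, harmless in `ℝ≥0∞`), into
`∑_r ζ({2}_r) x^{2r}`, while the Taylor series of the left side is `∑_r (π x)^{2r} / (2r+1)!`.
Both power series in `t = x²` converge and agree for `t > 0`, so their coefficients coincide.
-/

open Finset Filter Topology Real FormalMultilinearSeries
open scoped ENNReal Nat

def strictAntiPosEquiv (r : ℕ) :
    {m : Fin r → ℕ // (∀ i, 1 ≤ m i) ∧ StrictAnti m} ≃ (Fin r ↪o ℕ) where
  toFun m := OrderEmbedding.ofStrictMono (fun i => m.1 i.rev - 1) fun i j hij => by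
    have := m.2.2 (Fin.rev_lt_rev.2 hij)
    have := m.2.1 i.rev
    dsimp only
    omega
  invFun f := ⟨fun i => f i.rev + 1, fun _ => Nat.le_add_left 1 _, fun i j hij => by
    simpa using f.strictMono (Fin.rev_lt_rev.2 hij)⟩
  left_inv m := by
    ext i
    change m.1 i.rev.rev - 1 + 1 = m.1 i
    have := m.2.1 i
    rw [Fin.rev_rev]
    omega
  right_inv f := by ext i; simp

theorem tsum_strictAnti_pos_prod {α : Type*} [CommSemiring α] [TopologicalSpace α]
    (w : ℕ → α) (r : ℕ) :
    ∑' m : {m : Fin r → ℕ // (∀ i, 1 ≤ m i) ∧ StrictAnti m}, ∏ j, w (m.1 j)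
      = ∑' s : Set.powersetCard ℕ r, ∏ k ∈ (s : Finset ℕ), w (k + 1) := by
  rw [← ((strictAntiPosEquiv r).trans Set.powersetCard.ofFinEmbEquiv).tsum_eq]
  refine tsum_congr fun m => ?_
  rw [Equiv.trans_apply, Set.powersetCard.ofFinEmbEquiv_apply, Set.powersetCard.val_ofFinEmb,
    prod_map]
  refine Fintype.prod_equiv Fin.revPerm _ _ fun i => ?_
  change w (m.1 i) = w (m.1 i.rev.rev - 1 + 1)
  rw [Fin.rev_rev, Nat.sub_add_cancel (m.2.1 i)]

theorem Real.tendsto_euler_sinh_prod (x : ℝ) :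
    Tendsto (fun n : ℕ => π * x * ∏ j ∈ range n, (1 + x ^ 2 / ((j : ℝ) + 1) ^ 2)) atTop
      (𝓝 (sinh (π * x))) := by
  have h := (Complex.tendsto_euler_sin_prod (x * Complex.I)).mul_const (-Complex.I)
  have hfac (j : ℕ) :
      (1 : ℂ) - (x * Complex.I) ^ 2 / ((j : ℂ) + 1) ^ 2 = 1 + x ^ 2 / (j + 1) ^ 2 := by
    rw [mul_pow, Complex.I_sq]
    ring
  simp only [hfac, ← mul_assoc, ← Complex.ofReal_mul, Complex.sin_mul_I,
    ← Complex.ofReal_sinh] at h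
  rw [mul_assoc _ Complex.I, mul_neg, Complex.I_mul_I, neg_neg, mul_one] at h
  refine Filter.tendsto_ofReal_iff.1 (h.congr fun n => ?_)
  push_cast
  ring_nf
  rw [Complex.I_sq]
  ring

theorem ENNReal.tsum_pow_mul_tsum_powersetCard {ι : Type*} (f : ι → ℝ≥0∞) (x : ℝ≥0∞) :
    ∑' r, x ^ r * ∑' s : Set.powersetCard ι r, ∏ k ∈ (s : Finset ι), f k
      = ∑' s : Finset ι, ∏ k ∈ s, x * f k := by
  rw [← Set.powersetCard.prodEquiv.tsum_eq, ENNReal.tsum_sigma']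
  refine tsum_congr fun r => ?_
  rw [← ENNReal.tsum_mul_left]
  refine tsum_congr fun s => ?_
  rw [Set.powersetCard.prodEquiv_apply, prod_mul_distrib, prod_const,
    Set.powersetCard.card_eq s]

theorem ENNReal.tendsto_prod_range_one_add (f : ℕ → ℝ≥0∞) (x : ℝ≥0∞) :
    Tendsto (fun n => ∏ k ∈ range n, (1 + x * f k)) atTop
      (𝓝 (∑' r, x ^ r * ∑' s : Set.powersetCard ℕ r, ∏ k ∈ (s : Finset ℕ), f k)) := by
  rw [ENNReal.tsum_pow_mul_tsum_powersetCard]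
  exact (hasProd_one_add_of_hasSum_prod ENNReal.summable.hasSum).tendsto_prod_nat

theorem Real.hasSum_sinh_div_self {y : ℝ} (hy : y ≠ 0) :
    HasSum (fun n => y ^ (2 * n) / (2 * n + 1)!) (sinh y / y) := by
  refine ((Real.hasSum_sinh y).div_const y).congr_fun fun n => ?_
  rw [pow_succ]
  field_simp

theorem hasSum_of_tsum_ofReal_eq {α : Type*} {f : α → ℝ} {s : ℝ} (hf : ∀ a, 0 ≤ f a)
    (hs : 0 ≤ s) (h : ∑' a, ENNReal.ofReal (f a) = ENNReal.ofReal s) : HasSum f s := by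
  lift f to α → NNReal using hf
  lift s to NNReal using hs
  simp only [ENNReal.ofReal_coe_nnreal] at h
  exact NNReal.hasSum_coe.2 (ENNReal.hasSum_coe.1 (h ▸ ENNReal.summable.hasSum))

theorem FormalMultilinearSeries.one_le_radius_ofScalars_of_summable {a : ℕ → ℝ}
    (ha : Summable a) : 1 ≤ (ofScalars ℝ a).radius := by
  simpa using (ofScalars ℝ a).le_radius_of_summable (r := 1) (by
    simpa [ofScalars_norm] using ha.norm)

theorem eq_of_frequently_tsum_pow_eq {𝕜 : Type*} [NontriviallyNormedField 𝕜] [CompleteSpace 𝕜]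
    {a b : ℕ → 𝕜}
    (ha : 0 < (ofScalars 𝕜 a).radius) (hb : 0 < (ofScalars 𝕜 b).radius)
    (h : ∃ᶠ t in 𝓝[≠] 0, ∑' n, a n * t ^ n = ∑' n, b n * t ^ n) : a = b := by
  have hpa := ((ofScalars 𝕜 a).hasFPowerSeriesOnBall ha).hasFPowerSeriesAt
  have hpb := ((ofScalars 𝕜 b).hasFPowerSeriesOnBall hb).hasFPowerSeriesAt
  have hsum (c : ℕ → 𝕜) (t : 𝕜) : (ofScalars 𝕜 c).sum t = ∑' n, c n * t ^ n :=
    (ofScalars_sum_eq c t).trans (by simp)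
  have hev := (hpa.analyticAt.frequently_eq_iff_eventually_eq hpb.analyticAt).1 (by
    simpa only [hsum] using h)
  exact ofScalars_series_injective 𝕜 𝕜
    (hpa.eq_formalMultilinearSeries_of_eventually hpb hev)

/-- `ζ({2}_r)` summed over `r`-subsets of `ℕ`, the element `k` standing for the integer `k + 1`. -/
noncomputable def mzvTwo (r : ℕ) : ℝ≥0∞ :=
  ∑' s : Set.powersetCard ℕ r, ∏ k ∈ (s : Finset ℕ), ENNReal.ofReal (1 / ((k : ℝ) + 1) ^ 2)

theorem tsum_pow_mul_mzvTwo {x : ℝ} (hx : x ≠ 0) :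
    ∑' r, ENNReal.ofReal (x ^ 2) ^ r * mzvTwo r = ENNReal.ofReal (sinh (π * x) / (π * x)) := by
  refine tendsto_nhds_unique (ENNReal.tendsto_prod_range_one_add _ _) ?_
  have h := (Real.tendsto_euler_sinh_prod x).div_const (π * x)
  refine ((ENNReal.continuous_ofReal.tendsto _).comp h).congr fun n => ?_
  rw [Function.comp_apply, mul_div_cancel_left₀ _ (mul_ne_zero pi_ne_zero hx),
    ENNReal.ofReal_prod_of_nonneg fun k _ => by positivity]
  refine prod_congr rfl fun k _ => ?_
  rw [ENNReal.ofReal_add zero_le_one (by positivity), ENNReal.ofReal_one,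
    ← ENNReal.ofReal_mul (sq_nonneg x), mul_one_div]

theorem mzvTwo_ne_top (r : ℕ) : mzvTwo r ≠ ⊤ := by
  have h := ENNReal.le_tsum (f := fun r => ENNReal.ofReal (1 ^ 2) ^ r * mzvTwo r) r
  rw [tsum_pow_mul_mzvTwo one_ne_zero] at h
  simp only [one_pow, ENNReal.ofReal_one, one_mul] at h
  exact ne_top_of_le_ne_top ENNReal.ofReal_ne_top h

theorem hasSum_toReal_mzvTwo_mul_pow {x : ℝ} (hx : x ≠ 0) :
    HasSum (fun r => (mzvTwo r).toReal * (x ^ 2) ^ r) (sinh (π * x) / (π * x)) := by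
  have hπx := mul_ne_zero pi_ne_zero hx
  refine hasSum_of_tsum_ofReal_eq (fun r => mul_nonneg ENNReal.toReal_nonneg (by positivity))
    ((Real.hasSum_sinh_div_self hπx).nonneg fun n =>
      div_nonneg ((even_two_mul n).pow_nonneg _) (by positivity)) ?_
  rw [← tsum_pow_mul_mzvTwo hx]
  refine tsum_congr fun r => ?_
  rw [ENNReal.ofReal_mul ENNReal.toReal_nonneg, ENNReal.ofReal_toReal (mzvTwo_ne_top r),
    ENNReal.ofReal_pow (sq_nonneg x), mul_comm]

theorem toReal_mzvTwo (r : ℕ) : (mzvTwo r).toReal = π ^ (2 * r) / (2 * r + 1)! := by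
  have hcoeff {x : ℝ} (hx : x ≠ 0) :
      HasSum (fun r => π ^ (2 * r) / (2 * r + 1)! * (x ^ 2) ^ r) (sinh (π * x) / (π * x)) := by
    convert Real.hasSum_sinh_div_self (mul_ne_zero pi_ne_zero hx) using 2 with n
    ring
  refine congrFun (eq_of_frequently_tsum_pow_eq (a := fun r => (mzvTwo r).toReal)
    (b := fun r => π ^ (2 * r) / (2 * r + 1)!) ?_ ?_ ?_) r
  · exact one_pos.trans_le (one_le_radius_ofScalars_of_summable (by
      simpa using (hasSum_toReal_mzvTwo_mul_pow one_ne_zero).summable))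
  · exact one_pos.trans_le (one_le_radius_ofScalars_of_summable (by
      simpa using (hcoeff one_ne_zero).summable))
  · have hpos : ∀ᶠ t in 𝓝[>] (0 : ℝ), ∑' r, (mzvTwo r).toReal * t ^ r
        = ∑' r, π ^ (2 * r) / (2 * r + 1)! * t ^ r := by
      refine eventually_nhdsWithin_of_forall fun t (ht : 0 < t) => ?_
      have hx : √t ≠ 0 := (Real.sqrt_pos.2 ht).ne'
      rw [← sq_sqrt ht.le]
      exact (hasSum_toReal_mzvTwo_mul_pow hx).tsum_eq.trans (hcoeff hx).tsum_eq.symm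
    exact hpos.frequently.filter_mono (nhdsWithin_mono 0 fun t (ht : 0 < t) => ht.ne')

theorem mzv_two_pow_r_general (r : ℕ) :
    (∑' m : {m : Fin r → ℕ // (∀ i, 1 ≤ m i) ∧ StrictAnti m},
      ∏ j, (1 : ℝ) / ((m.1 j : ℝ) ^ 2))
      = Real.pi ^ (2 * r) / (Nat.factorial (2 * r + 1)) := by
  rw [← toReal_mzvTwo]
  refine (hasSum_of_tsum_ofReal_eq (fun m => by positivity) ENNReal.toReal_nonneg ?_).tsum_eq
  rw [ENNReal.ofReal_toReal (mzvTwo_ne_top r)]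
  calc ∑' m : {m : Fin r → ℕ // (∀ i, 1 ≤ m i) ∧ StrictAnti m},
        ENNReal.ofReal (∏ j, (1 : ℝ) / ((m.1 j : ℝ) ^ 2))
      = ∑' m : {m : Fin r → ℕ // (∀ i, 1 ≤ m i) ∧ StrictAnti m},
          ∏ j, ENNReal.ofReal (1 / ((m.1 j : ℝ) ^ 2)) :=
        tsum_congr fun m => ENNReal.ofReal_prod_of_nonneg fun j _ => by positivity
    _ = mzvTwo r := by
      rw [tsum_strictAnti_pos_prod (fun k => ENNReal.ofReal (1 / (k : ℝ) ^ 2)), mzvTwo]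
      simp only [Nat.cast_add, Nat.cast_one]

/-- ζ({2}_r) = π^{2r}/(2r+1)!. -/
theorem mzv_two_pow_r (r : ℕ) (hr : 1 ≤ r) :
    (∑' m : {m : Fin r → ℕ // (∀ i, 1 ≤ m i) ∧ StrictAnti m},
      ∏ j, (1 : ℝ) / ((m.1 j : ℝ) ^ 2))
      = Real.pi ^ (2 * r) / (Nat.factorial (2 * r + 1)) :=
  mzv_two_pow_r_general r
end

section
/- For every integer k ≥ 1, the two iterated (Chen) integrals over the simplex 0 ≤ x_{2k+1} ≤ x_{2k} ≤ ... ≤ x₁ ≤ 1 are equal: ∫ dx/(x₁x₂(1−x₂)(1−x₃)x₄(1−x₄)(1−x₅)⋯x_{2k}(1−x_{2k})(1−x_{2k+1})) = ∫ dy/(y₁y₂(1−y₂)y₃y₄(1−y₄)y₅⋯y_{2k}(1−y_{2k})(1−y_{2k+1})), where in the first integrand the differential forms attached to positions 1,...,2k+1 follow the pattern (1/x, 1/(x(1−x)), 1/(1−x)) repeating as dictated by the word 2,1,...,1 with inequality pattern (ℓs)^{k−1}ℓ, and in the second the pattern corresponds to the word 2,...,2,1 with all-ℓ pattern. -/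
open MeasureTheory

/-- Differential forms of the first Chen integral (word 2,1,…,1, pattern (ℓs)^{k-1}ℓ). -/
noncomputable def fForm (k : ℕ) (j : Fin (2 * k + 1)) (x : ℝ) : ℝ :=
  if j.val = 0 then 1 / x
  else if j.val % 2 = 1 then 1 / (x * (1 - x))
  else 1 / (1 - x)

/-- Differential forms of the second Chen integral (word 2,…,2,1, all-ℓ pattern). -/
noncomputable def gForm (k : ℕ) (j : Fin (2 * k + 1)) (y : ℝ) : ℝ :=
  if j.val % 2 = 1 then 1 / (y * (1 - y))
  else if j.val = 2 * k then 1 / (1 - y)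
  else 1 / y

/-- The simplex 0 ≤ x_{2k+1} ≤ ⋯ ≤ x₁ ≤ 1 (with 0-based decreasing coordinates). -/
def simplexSet (k : ℕ) : Set (Fin (2 * k + 1) → ℝ) :=
  {x | (∀ i, 0 ≤ x i ∧ x i ≤ 1) ∧ ∀ i j : Fin (2 * k + 1), i ≤ j → x j ≤ x i}

section ChenAuxTop
open Finset Set




lemma abel_rpow_prod (n : ℕ) (x a c : ℕ → ℝ)
    (hx0 : ∀ j < n, 0 < x j) (hx1 : ∀ j < n, x j ≤ 1)
    (hmono : ∀ j, j + 1 < n → x (j + 1) ≤ x j)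
    (hpre : ∀ m < n, ∑ j ∈ range m, c j ≤ ∑ j ∈ range m, a j)
    (htot : ∑ j ∈ range n, a j ≤ ∑ j ∈ range n, c j) :
    ∏ j ∈ range n, x j ^ c j ≤ ∏ j ∈ range n, x j ^ a j := by
  rcases Nat.eq_zero_or_pos n with rfl | hn
  · simp
  have key : ∑ j ∈ range n, Real.log (x j) * c j ≤ ∑ j ∈ range n, Real.log (x j) * a j := by
    have h0 : (0:ℝ) ≤ ∑ j ∈ range n, Real.log (x j) • (a j - c j) := by
      rw [Finset.sum_range_by_parts (fun j => Real.log (x j)) (fun j => a j - c j) n]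
      have h1 : (0:ℝ) ≤ Real.log (x (n - 1)) • ∑ i ∈ range n, (a i - c i) := by
        rw [smul_eq_mul]
        have hl : Real.log (x (n-1)) ≤ 0 :=
          Real.log_nonpos (hx0 _ (by omega)).le (hx1 _ (by omega))
        have hs : ∑ i ∈ range n, (a i - c i) ≤ 0 := by
          rw [Finset.sum_sub_distrib]; linarith
        exact mul_nonneg_of_nonpos_of_nonpos hl hs
      have h2 : ∑ i ∈ range (n - 1),
          (Real.log (x (i + 1)) - Real.log (x i)) • ∑ j ∈ range (i + 1), (a j - c j) ≤ 0 := by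
        apply Finset.sum_nonpos
        intro i hi
        rw [Finset.mem_range] at hi
        rw [smul_eq_mul]
        apply mul_nonpos_of_nonpos_of_nonneg
        · have := Real.log_le_log (hx0 (i+1) (by omega)) (hmono i (by omega))
          linarith
        · rw [Finset.sum_sub_distrib]
          have := hpre (i+1) (by omega)
          linarith
      linarith
    simp only [smul_eq_mul, mul_sub, Finset.sum_sub_distrib] at h0
    linarith
  have e1 : ∀ (b : ℕ → ℝ), ∏ j ∈ range n, x j ^ b j
      = Real.exp (∑ j ∈ range n, Real.log (x j) * b j) := by
    intro b
    rw [Real.exp_sum]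
    apply Finset.prod_congr rfl
    intro j hj
    rw [Finset.mem_range] at hj
    rw [Real.rpow_def_of_pos (hx0 j hj)]
  rw [e1 a, e1 c]
  exact Real.exp_le_exp.2 key

noncomputable def aExp : ℕ → ℝ := fun j => if j = 0 then 1 else if j % 2 = 1 then 1 else 0
noncomputable def bExp : ℕ → ℝ := fun j => if j = 0 then 0 else 1

lemma aExp_nonneg (j : ℕ) : 0 ≤ aExp j := by unfold aExp; split_ifs <;> norm_num
lemma bExp_nonneg (j : ℕ) : 0 ≤ bExp j := by unfold bExp; split_ifs <;> norm_num

lemma sum_aExp_odd (i : ℕ) : ∑ j ∈ range (2 * i + 1), aExp j = i + 1 := by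
  induction i with
  | zero => simp [aExp]
  | succ i ih =>
    have h : 2 * (i + 1) + 1 = (2 * i + 1) + 1 + 1 := by ring
    rw [h, Finset.sum_range_succ, Finset.sum_range_succ, ih]
    have h1 : aExp (2 * i + 1) = 1 := by
      unfold aExp; rw [if_neg (by omega), if_pos (by omega)]
    have h2 : aExp (2 * i + 1 + 1) = 0 := by
      unfold aExp; rw [if_neg (by omega), if_neg (by omega)]
    rw [h1, h2]; push_cast; ring

lemma sum_aExp_even (i : ℕ) : ∑ j ∈ range (2 * i + 2), aExp j = i + 2 := by
  have h : 2 * i + 2 = (2 * i + 1) + 1 := by ring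
  rw [h, Finset.sum_range_succ, sum_aExp_odd]
  have h1 : aExp (2 * i + 1) = 1 := by
    unfold aExp; rw [if_neg (by omega), if_pos (by omega)]
  rw [h1]; ring

lemma aExp_pre (k m : ℕ) (hm : m < 2 * k + 1) :
    ∑ j ∈ range m, ((k:ℝ) + 1) / (2 * k + 1) ≤ ∑ j ∈ range m, aExp j := by
  have hd : (0:ℝ) < 2 * k + 1 := by positivity
  rw [Finset.sum_const, Finset.card_range, nsmul_eq_mul]
  rcases Nat.even_or_odd m with ⟨i, hi⟩ | ⟨i, hi⟩
  · rcases Nat.eq_zero_or_pos m with rfl | hm0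
    · simp
    have him : m = 2 * (i - 1) + 2 := by omega
    rw [him, sum_aExp_even, ← mul_div_assoc, div_le_iff₀ hd]
    have hik : i - 1 ≤ 2 * k := by omega
    have hik' : ((i - 1 : ℕ) : ℝ) ≤ 2 * k := by exact_mod_cast hik
    push_cast
    nlinarith [hik']
  · have him : m = 2 * i + 1 := by omega
    rw [him, sum_aExp_odd, ← mul_div_assoc, div_le_iff₀ hd]
    push_cast
    have hik : i ≤ k := by omega
    have hik' : (i : ℝ) ≤ k := by exact_mod_cast hik
    nlinarith [hik']

lemma aExp_tot (k : ℕ) :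
    ∑ j ∈ range (2 * k + 1), aExp j ≤ ∑ j ∈ range (2 * k + 1), ((k:ℝ) + 1) / (2 * k + 1) := by
  rw [sum_aExp_odd, Finset.sum_const, Finset.card_range, nsmul_eq_mul]
  have hd : (0:ℝ) < 2 * k + 1 := by positivity
  push_cast
  rw [mul_div_cancel₀ _ hd.ne']

lemma fForm_pow (k : ℕ) (j : Fin (2 * k + 1)) (t : ℝ) (h0 : 0 < t) (h1 : t < 1) :
    fForm k j t = t ^ (-(aExp j.val)) * (1 - t) ^ (-(bExp j.val)) := by
  unfold fForm aExp bExp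
  split_ifs with hj0 hj1
  · rw [neg_zero, Real.rpow_zero, mul_one, Real.rpow_neg_one, one_div]
  · rw [Real.rpow_neg_one, Real.rpow_neg_one, one_div, mul_inv]
  · rw [neg_zero, Real.rpow_zero, Real.rpow_neg_one, one_div, one_mul]

lemma key_bound (k : ℕ) (x : Fin (2 * k + 1) → ℝ)
    (hx0 : ∀ j, 0 < x j) (hx1 : ∀ j, x j < 1)
    (hmono : ∀ i j : Fin (2 * k + 1), i ≤ j → x j ≤ x i) :
    ∏ j, fForm k j (x j) ≤
      ∏ j, (x j) ^ (-(((k:ℝ) + 1) / (2 * k + 1))) * (1 - x j) ^ (-((2 * (k:ℝ)) / (2 * k + 1))) := by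
  set ca : ℝ := ((k:ℝ) + 1) / (2 * k + 1) with hca
  set cb : ℝ := (2 * (k:ℝ)) / (2 * k + 1) with hcb
  set X : ℕ → ℝ := fun m => if h : m < 2 * k + 1 then x ⟨m, h⟩ else 2⁻¹ with hX
  have hXv : ∀ j : Fin (2 * k + 1), X j.val = x j := by
    intro j; simp only [hX, dif_pos j.isLt, Fin.eta]
  have hX0 : ∀ m, m < (2 * k + 1) → 0 < X m := by
    intro m hm; rw [hX]; simp only [dif_pos hm]; exact hx0 _
  have hX1 : ∀ m, m < (2 * k + 1) → X m < 1 := by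
    intro m hm; rw [hX]; simp only [dif_pos hm]; exact hx1 _
  have hXmono : ∀ p q, p ≤ q → q < (2 * k + 1) → X q ≤ X p := by
    intro p q hpq hq
    have hp : p < (2 * k + 1) := lt_of_le_of_lt hpq hq
    simp only [hX, dif_pos hq, dif_pos hp]
    exact hmono ⟨p, hp⟩ ⟨q, hq⟩ hpq
  have hca0 : 0 ≤ ca := by positivity
  have hcb0 : 0 ≤ cb := by positivity
  have hcb1 : cb ≤ 1 := by
    rw [hcb, div_le_one (by positivity)]; linarith
  -- rewrite both sides as range products
  have step1 : ∏ j, fForm k j (x j)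
      = ∏ m ∈ range (2 * k + 1), (X m ^ (-(aExp m)) * (1 - X m) ^ (-(bExp m))) := by
    rw [← Fin.prod_univ_eq_prod_range (fun m => X m ^ (-(aExp m)) * (1 - X m) ^ (-(bExp m))) (2 * k + 1)]
    apply Finset.prod_congr rfl
    intro j _
    rw [fForm_pow k j (x j) (hx0 j) (hx1 j), hXv j]
  have step2 : (∏ j, (x j) ^ (-ca) * (1 - x j) ^ (-cb))
      = ∏ m ∈ range (2 * k + 1), (X m ^ (-ca) * (1 - X m) ^ (-cb)) := by
    rw [← Fin.prod_univ_eq_prod_range (fun m => X m ^ (-ca) * (1 - X m) ^ (-cb)) (2 * k + 1)]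
    apply Finset.prod_congr rfl
    intro j _
    rw [hXv j]
  rw [step1, step2]
  -- main inequalities via Abel
  have P1 : ∏ m ∈ range (2 * k + 1), X m ^ ca ≤ ∏ m ∈ range (2 * k + 1), X m ^ aExp m := by
    refine abel_rpow_prod (2 * k + 1) X aExp (fun _ => ca) hX0 (fun m hm => (hX1 m hm).le)
      (fun j hj => hXmono j (j+1) (by omega) hj) ?_ ?_
    · intro m hm; exact aExp_pre k m hm
    · exact aExp_tot k
  have P2 : ∏ m ∈ range (2 * k + 1), (1 - X m) ^ cb ≤ ∏ m ∈ range (2 * k + 1), (1 - X m) ^ bExp m := by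
    have h := abel_rpow_prod (2 * k + 1) (fun j => 1 - X ((2 * k + 1) - 1 - j)) (fun j => bExp ((2 * k + 1) - 1 - j))
      (fun _ => cb) ?_ ?_ ?_ ?_ ?_
    · have r1 := Finset.prod_range_reflect (fun m => (1 - X m) ^ cb) (2 * k + 1)
      have r2 := Finset.prod_range_reflect (fun m => (1 - X m) ^ bExp m) (2 * k + 1)
      rw [r1, r2] at h
      exact h
    · intro j hj
      show 0 < 1 - X ((2 * k + 1) - 1 - j)
      have : (2 * k + 1) - 1 - j < (2 * k + 1) := by omega
      have := hX1 _ this; linarith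
    · intro j hj
      show 1 - X ((2 * k + 1) - 1 - j) ≤ 1
      have : (2 * k + 1) - 1 - j < (2 * k + 1) := by omega
      have := hX0 _ this; linarith
    · intro j hj
      show 1 - X ((2 * k + 1) - 1 - (j + 1)) ≤ 1 - X ((2 * k + 1) - 1 - j)
      have h1 : (2 * k + 1) - 1 - (j + 1) ≤ (2 * k + 1) - 1 - j := by omega
      have h2 : (2 * k + 1) - 1 - j < (2 * k + 1) := by omega
      have := hXmono _ _ h1 h2
      linarith
    · intro m hm
      have hone : ∀ j ∈ range m, bExp ((2 * k + 1) - 1 - j) = (1:ℝ) := by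
        intro j hj
        rw [Finset.mem_range] at hj
        unfold bExp; rw [if_neg (by omega)]
      have hsum : ∑ j ∈ range m, bExp ((2 * k + 1) - 1 - j) = m := by
        rw [Finset.sum_congr rfl hone, Finset.sum_const, Finset.card_range,
          nsmul_eq_mul, mul_one]
      rw [hsum, Finset.sum_const, Finset.card_range, nsmul_eq_mul]
      calc (m:ℝ) * cb ≤ m * 1 := by
            exact mul_le_mul_of_nonneg_left hcb1 (by positivity)
        _ = m := mul_one _
    · have hsum : ∑ j ∈ range (2 * k + 1), bExp ((2 * k + 1) - 1 - j) = 2 * k := by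
        rw [Finset.sum_range_reflect (fun j => bExp j) (2 * k + 1)]
        rw [Finset.sum_range_succ' (fun j => bExp j) (2 * k)]
        have h0 : bExp 0 = 0 := by unfold bExp; rw [if_pos rfl]
        have hone : ∀ j ∈ range (2 * k), bExp (j + 1) = (1:ℝ) := by
          intro j _
          unfold bExp; rw [if_neg (by omega)]
        rw [h0, add_zero, Finset.sum_congr rfl hone, Finset.sum_const,
          Finset.card_range, nsmul_eq_mul, mul_one]
        push_cast; ring
      rw [hsum, Finset.sum_const, Finset.card_range, nsmul_eq_mul, hcb]
      push_cast
      rw [mul_div_cancel₀ _ (by positivity)]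
  -- combine
  have e1 : ∏ m ∈ range (2 * k + 1), (X m ^ (-(aExp m)) * (1 - X m) ^ (-(bExp m)))
      = ((∏ m ∈ range (2 * k + 1), X m ^ aExp m) * (∏ m ∈ range (2 * k + 1), (1 - X m) ^ bExp m))⁻¹ := by
    rw [← Finset.prod_mul_distrib, ← Finset.prod_inv_distrib]
    apply Finset.prod_congr rfl
    intro m hm
    rw [Finset.mem_range] at hm
    rw [Real.rpow_neg (hX0 m hm).le, Real.rpow_neg (by linarith [hX1 m hm] : (0:ℝ) ≤ 1 - X m),
      mul_inv]
  have e2 : ∏ m ∈ range (2 * k + 1), (X m ^ (-ca) * (1 - X m) ^ (-cb))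
      = ((∏ m ∈ range (2 * k + 1), X m ^ ca) * (∏ m ∈ range (2 * k + 1), (1 - X m) ^ cb))⁻¹ := by
    rw [← Finset.prod_mul_distrib, ← Finset.prod_inv_distrib]
    apply Finset.prod_congr rfl
    intro m hm
    rw [Finset.mem_range] at hm
    rw [Real.rpow_neg (hX0 m hm).le, Real.rpow_neg (by linarith [hX1 m hm] : (0:ℝ) ≤ 1 - X m),
      mul_inv]
  rw [e1, e2]
  have hpos : (0:ℝ) < (∏ m ∈ range (2 * k + 1), X m ^ ca) * (∏ m ∈ range (2 * k + 1), (1 - X m) ^ cb) := by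
    apply mul_pos <;> exact Finset.prod_pos (fun m hm => Real.rpow_pos_of_pos
      (by rw [Finset.mem_range] at hm; first | exact hX0 m hm | linarith [hX1 m hm]) _)
  apply inv_anti₀ hpos
  apply mul_le_mul P1 P2 (Finset.prod_nonneg (fun m hm => Real.rpow_nonneg ?_ _))
    (Finset.prod_nonneg (fun m hm => Real.rpow_nonneg ?_ _))
  · rw [Finset.mem_range] at hm; linarith [hX1 m hm]
  · rw [Finset.mem_range] at hm; exact (hX0 m hm).le

lemma beta_half_integrable {a b : ℝ} (ha0 : 0 ≤ a) (ha : a < 1) (hb0 : 0 ≤ b) (hb : b < 1) :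
    IntegrableOn (fun t : ℝ => t ^ (-a) * (1 - t) ^ (-b)) (Set.Ioc 0 2⁻¹) := by
  have base : IntegrableOn (fun t : ℝ => t ^ (-a)) (Set.Ioc (0:ℝ) 2⁻¹) := by
    have h := intervalIntegral.intervalIntegrable_rpow' (a := 0) (b := 2⁻¹) (r := -a)
      (by linarith)
    rw [intervalIntegrable_iff, Set.uIoc_of_le (by norm_num : (0:ℝ) ≤ 2⁻¹)] at h
    exact h
  refine Integrable.mono' (base.const_mul 2) ?_ ?_
  · have : Measurable (fun t : ℝ => t ^ (-a) * (1 - t) ^ (-b)) := by fun_prop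
    exact this.aestronglyMeasurable
  · rw [ae_restrict_iff' measurableSet_Ioc]
    filter_upwards with t ht
    have h0t : 0 < t := ht.1
    have ht2 : t ≤ 2⁻¹ := ht.2
    have h1t : (2:ℝ)⁻¹ ≤ 1 - t := by linarith
    have hfn : 0 ≤ t ^ (-a) * (1 - t) ^ (-b) :=
      mul_nonneg (Real.rpow_nonneg h0t.le _) (Real.rpow_nonneg (by linarith) _)
    rw [Real.norm_eq_abs, abs_of_nonneg hfn]
    have hle : (1 - t) ^ (-b) ≤ (2:ℝ)⁻¹ ^ (-b) :=
      Real.rpow_le_rpow_of_nonpos (by norm_num) h1t (by linarith)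
    have h2b : (2:ℝ)⁻¹ ^ (-b) ≤ 2 := by
      rw [Real.inv_rpow (by norm_num), Real.rpow_neg (by norm_num), inv_inv]
      calc (2:ℝ) ^ b ≤ 2 ^ (1:ℝ) := Real.rpow_le_rpow_of_exponent_le one_le_two hb.le
        _ = 2 := Real.rpow_one 2
    calc t ^ (-a) * (1 - t) ^ (-b) ≤ t ^ (-a) * 2 :=
          mul_le_mul_of_nonneg_left (hle.trans h2b) (Real.rpow_nonneg h0t.le _)
      _ = 2 * t ^ (-a) := mul_comm _ _

lemma beta_integrable {a b : ℝ} (ha0 : 0 ≤ a) (ha : a < 1) (hb0 : 0 ≤ b) (hb : b < 1) :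
    IntegrableOn (fun t : ℝ => t ^ (-a) * (1 - t) ^ (-b)) (Set.Ioo 0 1) := by
  have p1 := beta_half_integrable ha0 ha hb0 hb
  have p2' := beta_half_integrable hb0 hb ha0 ha
  have mp1 : MeasurePreserving (fun t : ℝ => 1 - t) volume volume :=
    Measure.measurePreserving_sub_left volume 1
  have emb : MeasurableEmbedding (fun t : ℝ => 1 - t) :=
    (MeasurableEquiv.subLeft (1:ℝ)).measurableEmbedding
  have p2 : IntegrableOn (fun t : ℝ => t ^ (-a) * (1 - t) ^ (-b)) (Set.Ico 2⁻¹ 1) := by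
    have h := (mp1.integrableOn_comp_preimage emb).2 p2'
    have hpre : (fun t : ℝ => 1 - t) ⁻¹' (Set.Ioc 0 2⁻¹) = Set.Ico 2⁻¹ 1 := by
      ext t
      simp only [Set.mem_preimage, Set.mem_Ioc, Set.mem_Ico]
      constructor
      · rintro ⟨h1, h2⟩; constructor <;> linarith
      · rintro ⟨h1, h2⟩; constructor <;> linarith
    rw [hpre] at h
    refine h.congr_fun ?_ measurableSet_Ico
    intro t _
    simp only [Function.comp_apply, sub_sub_cancel]
    ring
  have hsub : Set.Ioo (0:ℝ) 1 ⊆ Set.Ioc 0 2⁻¹ ∪ Set.Ico 2⁻¹ 1 := by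
    intro t ht
    rcases le_or_gt t 2⁻¹ with h | h
    · exact Or.inl ⟨ht.1, h⟩
    · exact Or.inr ⟨h.le, ht.2⟩
  exact (p1.union p2).mono_set hsub

end ChenAuxTop

section ChenAux
open Finset Set

lemma measurable_fFormProd (k : ℕ) :
    Measurable (fun x : Fin (2 * k + 1) → ℝ => ∏ j, fForm k j (x j)) := by
  apply Finset.measurable_prod
  intro j _
  have hm : Measurable (fForm k j) := by
    unfold fForm; split_ifs <;> fun_prop
  exact hm.comp (measurable_pi_apply j)

lemma measurableSet_simplexSet (k : ℕ) : MeasurableSet (simplexSet k) := by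
  have hset : simplexSet k
      = ({x : Fin (2 * k + 1) → ℝ | ∀ i, 0 ≤ x i} ∩ {x | ∀ i, x i ≤ 1})
        ∩ ⋂ (i : Fin (2 * k + 1)) (j : Fin (2 * k + 1)) (_ : i ≤ j), {x | x j ≤ x i} := by
    ext x
    simp only [simplexSet, Set.mem_setOf_eq, Set.mem_inter_iff, Set.mem_iInter,
      Set.mem_setOf_eq]
    constructor
    · rintro ⟨h1, h2⟩
      exact ⟨⟨fun i => (h1 i).1, fun i => (h1 i).2⟩, fun i j h => h2 i j h⟩
    · rintro ⟨⟨h1, h2⟩, h3⟩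
      exact ⟨fun i => ⟨h1 i, h2 i⟩, h3⟩
  rw [hset]
  refine MeasurableSet.inter (MeasurableSet.inter ?_ ?_) ?_
  · rw [Set.setOf_forall]
    exact MeasurableSet.iInter fun i =>
      measurableSet_le measurable_const (measurable_pi_apply i)
  · rw [Set.setOf_forall]
    exact MeasurableSet.iInter fun i =>
      measurableSet_le (measurable_pi_apply i) measurable_const
  · exact MeasurableSet.iInter fun i => MeasurableSet.iInter fun j =>
      MeasurableSet.iInter fun _ =>
        measurableSet_le (measurable_pi_apply j) (measurable_pi_apply i)

lemma integrableOn_fProd (k : ℕ) (hk : 1 ≤ k) :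
    MeasureTheory.IntegrableOn (fun x => ∏ j, fForm k j (x j)) (simplexSet k) := by
  have hk' : (1:ℝ) ≤ (k:ℝ) := by exact_mod_cast hk
  set ca : ℝ := ((k:ℝ) + 1) / (2 * k + 1) with hca
  set cb : ℝ := (2 * (k:ℝ)) / (2 * k + 1) with hcb
  have hca0 : 0 ≤ ca := by positivity
  have hcb0 : 0 ≤ cb := by positivity
  have hca1 : ca < 1 := by rw [hca, div_lt_one (by positivity)]; linarith
  have hcb1 : cb < 1 := by rw [hcb, div_lt_one (by positivity)]; linarith
  set hh : ℝ → ℝ := (Set.Ioo (0:ℝ) 1).indicator (fun t => t ^ (-ca) * (1 - t) ^ (-cb)) with hhh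
  have hhInt : MeasureTheory.Integrable hh := by
    rw [hhh, MeasureTheory.integrable_indicator_iff measurableSet_Ioo]
    exact beta_integrable hca0 hca1 hcb0 hcb1
  have hhnn : ∀ t, 0 ≤ hh t := by
    intro t
    apply Set.indicator_nonneg
    intro s hs
    exact mul_nonneg (Real.rpow_nonneg hs.1.le _) (Real.rpow_nonneg (by linarith [hs.2]) _)
  have HInt : MeasureTheory.Integrable (fun x : Fin (2 * k + 1) → ℝ => ∏ j, hh (x j)) :=
    MeasureTheory.Integrable.fintype_prod (fun _ => hhInt)
  rw [← MeasureTheory.integrable_indicator_iff (measurableSet_simplexSet k)]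
  refine HInt.mono' ?_ ?_
  · exact ((measurable_fFormProd k).indicator (measurableSet_simplexSet k)).aestronglyMeasurable
  · have hae : ∀ᵐ x : Fin (2 * k + 1) → ℝ, ∀ j, x j ≠ 0 ∧ x j ≠ 1 := by
      rw [MeasureTheory.ae_all_iff]
      intro j
      have h0 : ∀ᵐ x : Fin (2 * k + 1) → ℝ, x j ≠ 0 := by
        have := MeasureTheory.Measure.ae_eval_ne
          (fun _ : Fin (2 * k + 1) => (volume : MeasureTheory.Measure ℝ)) j (0:ℝ)
        rwa [← MeasureTheory.volume_pi] at this
      have h1 : ∀ᵐ x : Fin (2 * k + 1) → ℝ, x j ≠ 1 := by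
        have := MeasureTheory.Measure.ae_eval_ne
          (fun _ : Fin (2 * k + 1) => (volume : MeasureTheory.Measure ℝ)) j (1:ℝ)
        rwa [← MeasureTheory.volume_pi] at this
      exact h0.and h1
    filter_upwards [hae] with x hx
    by_cases hxS : x ∈ simplexSet k
    · rw [Set.indicator_of_mem hxS]
      have hx0 : ∀ j, 0 < x j := fun j => lt_of_le_of_ne (hxS.1 j).1 (Ne.symm (hx j).1)
      have hx1 : ∀ j, x j < 1 := fun j => lt_of_le_of_ne (hxS.1 j).2 (hx j).2
      have hb := key_bound k x hx0 hx1 hxS.2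
      have hnn : 0 ≤ ∏ j, fForm k j (x j) := by
        apply Finset.prod_nonneg
        intro j _
        have h0 := hx0 j
        have h1 := hx1 j
        unfold fForm
        split_ifs
        · exact le_of_lt (div_pos one_pos h0)
        · exact le_of_lt (div_pos one_pos (mul_pos h0 (by linarith)))
        · exact le_of_lt (div_pos one_pos (by linarith))
      rw [Real.norm_eq_abs, abs_of_nonneg hnn]
      refine hb.trans_eq ?_
      apply Finset.prod_congr rfl
      intro j _
      rw [hhh, Set.indicator_of_mem (show x j ∈ Set.Ioo (0:ℝ) 1 from ⟨hx0 j, hx1 j⟩)]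
    · rw [Set.indicator_of_notMem hxS]
      simp only [norm_zero]
      exact Finset.prod_nonneg fun j _ => hhnn _

lemma gForm_eq (k : ℕ) (i : Fin (2 * k + 1)) (t : ℝ) :
    gForm k i t = fForm k (Fin.rev i) (1 - t) := by
  have hi : i.val < 2 * k + 1 := i.isLt
  have hrev : (Fin.rev i).val = 2 * k - i.val := by
    rw [Fin.val_rev]; omega
  unfold fForm gForm
  rw [hrev]
  by_cases h1 : i.val % 2 = 1
  · rw [if_pos h1, if_neg (by omega), if_pos (by omega), sub_sub_cancel, mul_comm]
  · by_cases h2 : i.val = 2 * k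
    · rw [if_neg h1, if_pos h2, if_pos (by omega)]
    · rw [if_neg h1, if_neg h2, if_neg (by omega), if_neg (by omega), sub_sub_cancel]

end ChenAux

/-- The two Chen iterated integrals converge and are equal. -/
theorem chen_integrals_eq (k : ℕ) (hk : 1 ≤ k) :
    IntegrableOn (fun x => ∏ j, fForm k j (x j)) (simplexSet k) ∧
    IntegrableOn (fun y => ∏ j, gForm k j (y j)) (simplexSet k) ∧
    ∫ x in simplexSet k, ∏ j, fForm k j (x j)
      = ∫ y in simplexSet k, ∏ j, gForm k j (y j) := by
  have hfInt := integrableOn_fProd k hk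
  set T : (Fin (2 * k + 1) → ℝ) ≃ᵐ (Fin (2 * k + 1) → ℝ) :=
    MeasurableEquiv.arrowCongr' (Fin.revPerm) (MeasurableEquiv.subLeft (1:ℝ)) with hT
  have hTapp : ∀ (y : Fin (2 * k + 1) → ℝ) (j : Fin (2 * k + 1)),
      T y j = 1 - y (Fin.rev j) := fun y j => rfl
  have hTmp : MeasurePreserving T volume volume := by
    apply volume_preserving_arrowCongr'
    exact Measure.measurePreserving_sub_left volume 1
  have hTS : ∀ y ∈ simplexSet k, T y ∈ simplexSet k := by
    intro y hy
    constructor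
    · intro j
      rw [hTapp]
      have h := hy.1 (Fin.rev j)
      constructor <;> linarith [h.1, h.2]
    · intro i j hij
      rw [hTapp, hTapp]
      have h := hy.2 (Fin.rev j) (Fin.rev i) (by rwa [Fin.rev_le_rev])
      linarith
  have hTT : ∀ y, T (T y) = y := by
    intro y
    funext j
    rw [hTapp, hTapp, Fin.rev_rev]
    ring
  have hpreS : T ⁻¹' (simplexSet k) = simplexSet k := by
    ext y
    constructor
    · intro h
      have h2 := hTS _ h
      rwa [hTT] at h2
    · exact fun h => hTS y h
  have hcomp : ∀ y, (∏ j, fForm k j (T y j)) = ∏ j, gForm k j (y j) := by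
    intro y
    have e1 : ∏ j, gForm k j (y j) = ∏ j, fForm k (Fin.rev j) (1 - y j) :=
      Finset.prod_congr rfl (fun j _ => gForm_eq k j (y j))
    have e2 : ∏ j, fForm k j (T y j) = ∏ j, fForm k j (1 - y (Fin.rev j)) :=
      Finset.prod_congr rfl (fun j _ => by rw [hTapp])
    rw [e1, e2]
    exact (Fintype.prod_equiv (Fin.revPerm)
      (fun j => fForm k (Fin.rev j) (1 - y j))
      (fun j => fForm k j (1 - y (Fin.rev j)))
      (fun j => by simp [Fin.rev_rev])).symm
  have hgInt : IntegrableOn (fun y => ∏ j, gForm k j (y j)) (simplexSet k) := by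
    have h := (hTmp.integrableOn_comp_preimage T.measurableEmbedding).2 hfInt
    rw [hpreS] at h
    exact h.congr_fun (fun y _ => hcomp y) (measurableSet_simplexSet k)
  refine ⟨hfInt, hgInt, ?_⟩
  have h := hTmp.setIntegral_preimage_emb T.measurableEmbedding
    (fun x => ∏ j, fForm k j (x j)) (simplexSet k)
  rw [hpreS] at h
  rw [← h]
  refine integral_congr_ae (Filter.Eventually.of_forall fun y => ?_)
  exact hcomp y
end
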